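/- arXiv:2210.02394 — 3 statements merged into one kernel-verified Lean document; each statement's English description precedes it below -/
import Mathlib

section
/- For every integer d ≥ 1 and n = 8d + 4, the number of jammed signed graphs on the labeled vertex set {1, …, n} is at least (n − 1)! / 2^{n/2}. -/
open Finset

/-- A signed graph on `n` vertices: `true` = friendship (+1), `false` = enmity (−1). -/
abbrev SignedGraph (n : ℕ) := Fin n → Fin n → Bool

/-- The sign assignment is symmetric (it is an assignment to undirected edges). -/
def Symm {n : ℕ} (G : SignedGraph n) : Prop := ∀ u v, G u v = G v u

/-- The triad `{u,v,w}` is balanced: it contains an even number (0 or 2) of enmity edges. -/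
def BalancedTriad {n : ℕ} (G : SignedGraph n) (u v w : Fin n) : Prop :=
  Bool.xor (G u v) (Bool.xor (G v w) (G u w)) = true

instance {n : ℕ} (G : SignedGraph n) (u v w : Fin n) :
    Decidable (BalancedTriad G u v w) :=
  inferInstanceAs (Decidable (_ = true))

/-- The rank of the edge `(u,v)`: the number of imbalanced triads containing it. -/
def rank {n : ℕ} (G : SignedGraph n) (u v : Fin n) : ℕ :=
  (univ.filter (fun w => w ≠ u ∧ w ≠ v ∧ ¬ BalancedTriad G u v w)).card

/-- A signed graph is balanced if every triad is balanced. -/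
def IsBalanced {n : ℕ} (G : SignedGraph n) : Prop :=
  ∀ u v w : Fin n, u ≠ v → v ≠ w → u ≠ w → BalancedTriad G u v w

/-- A signed graph is jammed if it is not balanced and every edge `e`
satisfies `2 * r_e < n - 2`. -/
def IsJammed {n : ℕ} (G : SignedGraph n) : Prop :=
  ¬ IsBalanced G ∧ ∀ u v : Fin n, u ≠ v → 2 * rank G u v < n - 2

/-- Flipping (reversing the sign of) the undirected edge `p`. -/
def flipEdge {n : ℕ} (G : SignedGraph n) (p : Sym2 (Fin n)) : SignedGraph n :=
  fun x y => if s(x, y) = p then !(G x y) else G x y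

/-- A CTD-admissible flipEdge: the edge lies in some imbalanced triad and `2 r_e ≥ n - 2`. -/
def CTDAdmissible {n : ℕ} (G : SignedGraph n) (p : Sym2 (Fin n)) : Prop :=
  ∃ u v : Fin n, p = s(u, v) ∧ u ≠ v ∧
    (∃ w, w ≠ u ∧ w ≠ v ∧ ¬ BalancedTriad G u v w) ∧
    n - 2 ≤ 2 * rank G u v

/-- A BED-admissible flipEdge: there is an imbalanced triad containing the edge
in which the edge has maximal rank. -/
def BEDAdmissible {n : ℕ} (G : SignedGraph n) (p : Sym2 (Fin n)) : Prop :=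
  ∃ u v w : Fin n, p = s(u, v) ∧ u ≠ v ∧ w ≠ u ∧ w ≠ v ∧
    ¬ BalancedTriad G u v w ∧
    rank G v w ≤ rank G u v ∧ rank G u w ≤ rank G u v

/-- `FlipSeq Adm G L H`: the list of edges `L` is a sequence of `Adm`-admissible flips
transforming `G` into `H`. -/
inductive FlipSeq {n : ℕ} (Adm : SignedGraph n → Sym2 (Fin n) → Prop) :
    SignedGraph n → List (Sym2 (Fin n)) → SignedGraph n → Prop
  | nil (G : SignedGraph n) : FlipSeq Adm G [] G
  | cons {G H : SignedGraph n} {L : List (Sym2 (Fin n))} (p : Sym2 (Fin n)) :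
      Adm G p → FlipSeq Adm (flipEdge G p) L H → FlipSeq Adm G (p :: L) H

/-- Circular distance between cluster indices. -/
def circDist {m : ℕ} (i j : Fin m) : ℕ := min (i - j : Fin m).val (j - i : Fin m).val

/-- The circular graph: given a cluster assignment `c`, an edge is a friendship iff
its endpoints lie in clusters at circular distance at most `k`. -/
def circular {n m : ℕ} (c : Fin n → Fin m) (k : ℕ) : SignedGraph n :=
  fun u v => decide (circDist (c u) (c v) ≤ k)

/-- The jammed state `J_n`: three fixed clusters of size `n/3`, friendships inside
clusters, enmities across. -/
def Jn (n : ℕ) : SignedGraph n :=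
  fun u v => decide (u.val / (n / 3) = v.val / (n / 3))

/-- The signed graph obtained from `G` by flipping exactly the edges in `F`. -/
def perturb {n : ℕ} (G : SignedGraph n) (F : Finset (Sym2 (Fin n))) : SignedGraph n :=
  fun u v => if s(u, v) ∈ F then !(G u v) else G u v

/-- The set of (undirected, non-diagonal) edges on which two signed graphs differ. -/
def diffEdges {n : ℕ} (G C : SignedGraph n) : Finset (Sym2 (Fin n)) :=
  univ.filter (fun p => ∃ u v : Fin n, p = s(u, v) ∧ u ≠ v ∧ G u v ≠ C u v)

/-- `C` is a closest balanced state to `G`: `C` is balanced and minimizes the number of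
edges on which the signs differ from `G`. -/
def IsClosestBalanced {n : ℕ} (G C : SignedGraph n) : Prop :=
  Symm C ∧ IsBalanced C ∧
    ∀ C' : SignedGraph n, Symm C' → IsBalanced C' →
      (diffEdges G C).card ≤ (diffEdges G C').card

/-- The two sides of the balanced state `B_n`: clusters `0, 1, 5` versus `2, 3, 4`. -/
def sixPart (i : Fin 6) : Bool := decide (i = 0 ∨ i = 1 ∨ i = 5)

/-- The balanced state `B_n` whose friendship parts are `V₀ ∪ V₁ ∪ V₅` and `V₂ ∪ V₃ ∪ V₄`. -/
def Bgraph {n : ℕ} (c : Fin n → Fin 6) : SignedGraph n :=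
  fun u v => sixPart (c u) == sixPart (c v)

/-- The number of good triads containing the red edge `(u,v)`: imbalanced triads in which
the red edge has strictly greater rank than each of the other two edges. -/
def goodCount {n : ℕ} (G : SignedGraph n) (u v : Fin n) : ℕ :=
  (univ.filter (fun w => w ≠ u ∧ w ≠ v ∧ ¬ BalancedTriad G u v w ∧
    rank G v w < rank G u v ∧ rank G u w < rank G u v)).card

/-- The number of bad triads containing the red edge `(u,v)`: imbalanced triads that
are not good. -/
def badCount {n : ℕ} (G : SignedGraph n) (u v : Fin n) : ℕ :=
  (univ.filter (fun w => w ≠ u ∧ w ≠ v ∧ ¬ BalancedTriad G u v w ∧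
    ¬ (rank G v w < rank G u v ∧ rank G u w < rank G u v))).card

/-! For `n = 8d + 4`, split the vertices into `4d + 2` clusters of two (`2i` and `2i+1` form
cluster `i`), arranged on a circle, and let two vertices be friends iff their clusters are at
circular distance at most `d`. Two distinct clusters `a`, `b` see an imbalanced triad through a
third cluster `c` only if `c` lies in the symmetric difference of the friend arcs of `a` and of
`b` (or of the antipode of `a`, when `a` and `b` are enemies); that symmetric difference has at
most `2d` clusters, so every edge has rank at most `4d < (n - 2) / 2`, while the clusters `0`,
`d + 1`, `2d + 2` form an all-enemy triad. Hence this graph and all its relabellings are jammed.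

Their number is `n! / |Aut|`. An automorphism permutes the clusters (the twin classes) by an
automorphism of the circular graph on clusters; it preserves the cycle of adjacent clusters, so it
is one of the `2 (4d + 2)` dihedral symmetries, and within each cluster it can only choose
which vertex goes where. Thus `|Aut| ≤ n 2^(n/2)`, which gives `(n - 1)! / 2^(n/2)` graphs. -/

namespace Fin

lemma val_sub_eq_ite {n : ℕ} (a b : Fin n) :
    (a - b).val = if b.val ≤ a.val then a.val - b.val else n + a.val - b.val := by
  split_ifs with h
  · exact coe_sub_iff_le.2 h
  · exact coe_sub_iff_lt.2 (by omega)

lemma val_sub_add_val_sub {n : ℕ} {a b : Fin n} (h : a ≠ b) :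
    (a - b).val + (b - a).val = n := by
  have := val_ne_of_ne h
  rw [val_sub_eq_ite, val_sub_eq_ite]
  split_ifs <;> omega

lemma val_sub_eq_ite_of_sub {n : ℕ} [NeZero n] (a b c : Fin n) :
    (c - b).val = if (b - a).val ≤ (c - a).val then (c - a).val - (b - a).val
      else n + (c - a).val - (b - a).val := by
  rw [← sub_sub_sub_cancel_right c b a, val_sub_eq_ite]

lemma two_ne_zero_of_add_three (n : ℕ) : (2 : Fin (n + 3)) ≠ 0 := by
  simp [Fin.ext_iff, Nat.mod_eq_of_lt (show 2 < n + 3 by omega)]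

end Fin

lemma circDist_le_iff {m : ℕ} (a b : Fin m) (k : ℕ) :
    circDist a b ≤ k ↔ (b - a).val ≤ k ∨ m ≤ (b - a).val + k := by
  simp only [circDist, Fin.val_sub_eq_ite]
  split_ifs <;> omega

lemma circDist_comm {m : ℕ} (a b : Fin m) : circDist a b = circDist b a := min_comm _ _

section Relabel

variable {n : ℕ}

lemma not_balancedTriad_iff (G : SignedGraph n) (u v w : Fin n) :
    ¬BalancedTriad G u v w ↔ G u v = (G v w ^^ G u w) := by
  unfold BalancedTriad
  cases G u v <;> cases G v w <;> cases G u w <;> decide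

lemma rank_comp_le {m k : ℕ} (G : SignedGraph m) (f : Fin n → Fin m)
    (hf : ∀ c, #{u | f u = c} ≤ k) (u v : Fin n) :
    rank (fun x y => G (f x) (f y)) u v ≤ k * #{c | ¬BalancedTriad G (f u) (f v) c} := by
  calc rank (fun x y => G (f x) (f y)) u v
      ≤ #{w | ¬BalancedTriad G (f u) (f v) (f w)} :=
        card_le_card fun w hw => by
          simp only [mem_filter, mem_univ, true_and] at hw ⊢
          exact hw.2.2
    _ ≤ k * #((univ.filter fun w => ¬BalancedTriad G (f u) (f v) (f w)).image f) :=
        card_le_mul_card_image _ _ fun c _ =>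
          (card_le_card (monotone_filter_left _ (filter_subset _ _))).trans (hf c)
    _ ≤ k * #{c | ¬BalancedTriad G (f u) (f v) c} := by
        gcongr
        intro c hc
        obtain ⟨w, hw, rfl⟩ := mem_image.1 hc
        simpa using hw

def relabel (G : SignedGraph n) (σ : Equiv.Perm (Fin n)) : SignedGraph n :=
  fun u v => G (σ u) (σ v)

@[simp]
lemma relabel_apply (G : SignedGraph n) (σ : Equiv.Perm (Fin n)) (u v : Fin n) :
    relabel G σ u v = G (σ u) (σ v) := rfl

lemma relabel_mul (G : SignedGraph n) (σ τ : Equiv.Perm (Fin n)) :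
    relabel G (σ * τ) = relabel (relabel G σ) τ := rfl

lemma rank_relabel (G : SignedGraph n) (σ : Equiv.Perm (Fin n)) (u v : Fin n) :
    rank (relabel G σ) u v = rank G (σ u) (σ v) := by
  refine card_equiv σ fun w => ?_
  simp only [mem_filter, mem_univ, true_and, σ.injective.ne_iff]
  rfl

lemma Symm.relabel {G : SignedGraph n} (hG : Symm G) (σ : Equiv.Perm (Fin n)) :
    Symm (relabel G σ) := fun u v => hG (σ u) (σ v)

lemma IsJammed.relabel {G : SignedGraph n} (hG : IsJammed G) (σ : Equiv.Perm (Fin n)) :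
    IsJammed (relabel G σ) := by
  refine ⟨fun hbal => hG.1 fun u v w huv hvw huw => ?_, fun u v huv => ?_⟩
  · simpa [BalancedTriad] using
      hbal (σ.symm u) (σ.symm v) (σ.symm w) (by simpa) (by simpa) (by simpa)
  · rw [rank_relabel]
    exact hG.2 _ _ (σ.injective.ne huv)

lemma relabel_row_eq_iff {G : SignedGraph n} {π : Equiv.Perm (Fin n)} (hπ : relabel G π = G)
    (u v : Fin n) : G (π u) = G (π v) ↔ G u = G v := by
  have hrow : ∀ w, G (π w) = G w ∘ π.symm := fun w => funext fun x => by
    conv_rhs => rw [← hπ]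
    simp
  rw [hrow, hrow]
  exact π.symm.surjective.injective_comp_right.eq_iff

lemma card_filter_relabel_eq_le (G : SignedGraph n) (τ : Equiv.Perm (Fin n)) :
    #{σ | relabel G σ = relabel G τ} ≤ #{π | relabel G π = G} := by
  refine card_le_card_of_injOn (· * τ⁻¹) (fun σ hσ => ?_) (fun σ _ σ' _ h => mul_right_cancel h)
  simp only [coe_filter, mem_univ, true_and, Set.mem_ofPred_eq] at hσ ⊢
  rw [relabel_mul, hσ, ← relabel_mul, mul_inv_cancel]
  rfl

lemma factorial_le_card_image_relabel_mul (G : SignedGraph n) :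
    n.factorial ≤ #(univ.image (relabel G)) * #{π | relabel G π = G} := by
  calc n.factorial = #(univ : Finset (Equiv.Perm (Fin n))) := by simp [Fintype.card_perm]
    _ ≤ #{π | relabel G π = G} * #(univ.image (relabel G)) := by
      refine card_le_mul_card_image _ _ fun H hH => ?_
      obtain ⟨τ, -, rfl⟩ := mem_image.1 hH
      exact card_filter_relabel_eq_le G τ
    _ = _ := mul_comm _ _

end Relabel

section CycleGraph

open SimpleGraph Fin.CommRing

variable {n : ℕ} {F G : Fin (n + 3) → Fin (n + 3)}

lemma sub_eq_sub_of_cycleGraph_adj (hF : Function.Injective F)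
    (hadj : ∀ a, (cycleGraph (n + 3)).Adj (F a) (F (a + 1))) (a : Fin (n + 3)) :
    F (a + 2) - F (a + 1) = F (a + 1) - F a := by
  have hne : F (a + 2) ≠ F a := hF.ne (by simpa using Fin.two_ne_zero_of_add_three n)
  have h₂ : (cycleGraph (n + 3)).Adj (F (a + 1)) (F (a + 2)) := by
    convert hadj (a + 1) using 2
    ring
  rcases cycleGraph_adj.1 (hadj a) with h₁ | h₁ <;> rcases cycleGraph_adj.1 h₂ with h₂ | h₂
  · linear_combination h₁ - h₂
  · exact absurd (by linear_combination h₂ - h₁) hne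
  · exact absurd (by linear_combination h₁ - h₂) hne
  · linear_combination h₂ - h₁

lemma eq_of_cycleGraph_adj_of_adj {x y z : Fin (n + 3)} (hy : (cycleGraph (n + 3)).Adj x y)
    (hz : (cycleGraph (n + 3)).Adj x z) (h : y = x + 1 ↔ z = x + 1) : y = z := by
  have htwo := Fin.two_ne_zero_of_add_three n
  rcases cycleGraph_adj.1 hy with hy | hy <;> rcases cycleGraph_adj.1 hz with hz | hz
  · linear_combination hz - hy
  · exact absurd (by linear_combination -h.2 (by linear_combination hz) - hy) htwo
  · exact absurd (by linear_combination -h.1 (by linear_combination hy) - hz) htwo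
  · linear_combination hy - hz

theorem eq_of_cycleGraph_adj (hF : Function.Injective F) (hG : Function.Injective G)
    (hFadj : ∀ a, (cycleGraph (n + 3)).Adj (F a) (F (a + 1)))
    (hGadj : ∀ a, (cycleGraph (n + 3)).Adj (G a) (G (a + 1)))
    (h₀ : F 0 = G 0) (h₁ : F 1 = F 0 + 1 ↔ G 1 = G 0 + 1) : F = G := by
  have h₁' : F 1 = G 1 := by
    have hF₀ := hFadj 0
    have hG₀ := hGadj 0
    rw [zero_add, h₀] at hF₀
    rw [zero_add] at hG₀
    exact eq_of_cycleGraph_adj_of_adj hF₀ hG₀ (by rwa [h₀] at h₁)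
  have key : ∀ k : ℕ, F k = G k ∧ F (k + 1) = G (k + 1) := by
    intro k
    induction k with
    | zero => simpa using ⟨h₀, h₁'⟩
    | succ k ih =>
      push_cast at ih ⊢
      refine ⟨ih.2, ?_⟩
      have hF₂ := sub_eq_sub_of_cycleGraph_adj hF hFadj k
      have hG₂ := sub_eq_sub_of_cycleGraph_adj hG hGadj k
      rw [add_assoc, one_add_one_eq_two]
      linear_combination hF₂ - hG₂ + 2 * ih.2 - ih.1
  funext a
  simpa using (key a.val).1

end CycleGraph

section ClusterGraph

variable {d : ℕ}

def clusterGraph (d : ℕ) : SignedGraph (4 * d + 2) := circular id d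

lemma clusterGraph_apply (a b : Fin (4 * d + 2)) :
    clusterGraph d a b = decide ((b - a).val ≤ d ∨ 3 * d + 2 ≤ (b - a).val) := by
  simp only [clusterGraph, circular, id, circDist_le_iff, decide_eq_decide]
  omega

lemma clusterGraph_add_left (a b c : Fin (4 * d + 2)) :
    clusterGraph d (a + b) (a + c) = clusterGraph d b c := by
  rw [clusterGraph_apply, clusterGraph_apply, add_sub_add_left_eq_sub]

lemma card_filter_clusterGraph_ne_le_of_le {a b : Fin (4 * d + 2)} (hab : (b - a).val ≤ d) :
    #{c | clusterGraph d a c ≠ clusterGraph d b c} ≤ 2 * d := by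
  -- seen from `a`, the friend arcs of `a` and `b` differ only inside these two windows
  calc #{c | clusterGraph d a c ≠ clusterGraph d b c}
      ≤ #(Ico (d + 1) (2 * d + 1) ∪ Ico (3 * d + 2) (4 * d + 2)) := by
        refine card_le_card_of_injOn (fun c => (c - a).val) (fun c hc => ?_)
          (fun c _ c' _ h => sub_left_inj.1 (Fin.ext h))
        simp only [coe_filter, mem_univ, true_and, Set.mem_ofPred_eq, clusterGraph_apply,
          Fin.val_sub_eq_ite_of_sub a b c, ne_eq, decide_eq_decide] at hc
        simp only [coe_union, coe_Ico, Set.mem_union, Set.mem_Ico]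
        split_ifs at hc <;> omega
    _ ≤ 2 * d := (card_union_le _ _).trans (by simp only [Nat.card_Ico]; omega)

lemma card_filter_clusterGraph_ne_le {a b : Fin (4 * d + 2)} (hab : clusterGraph d a b = true) :
    #{c | clusterGraph d a c ≠ clusterGraph d b c} ≤ 2 * d := by
  rw [clusterGraph_apply, decide_eq_true_eq] at hab
  by_cases h : (b - a).val ≤ d
  · exact card_filter_clusterGraph_ne_le_of_le h
  · have hba : (a - b).val ≤ d := by
      rcases eq_or_ne a b with rfl | hne
      · simp
      · have := Fin.val_sub_add_val_sub hne
        omega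
    simpa only [ne_comm] using card_filter_clusterGraph_ne_le_of_le hba

def antipode (a : Fin (4 * d + 2)) : Fin (4 * d + 2) := a + ⟨2 * d + 1, by omega⟩

lemma clusterGraph_antipode (a c : Fin (4 * d + 2)) :
    clusterGraph d (antipode a) c = !clusterGraph d a c := by
  rw [clusterGraph_apply, clusterGraph_apply, Fin.val_sub_eq_ite_of_sub a, antipode,
    add_sub_cancel_left, ← decide_not]
  simp only [decide_eq_decide]
  split_ifs <;> omega

lemma card_imbalanced_clusterGraph_le (a b : Fin (4 * d + 2)) :
    #{c | ¬BalancedTriad (clusterGraph d) a b c} ≤ 2 * d := by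
  simp only [not_balancedTriad_iff]
  cases hab : clusterGraph d a b
  · have hfr : clusterGraph d (antipode a) b = true := by rw [clusterGraph_antipode, hab]; rfl
    convert card_filter_clusterGraph_ne_le hfr using 3 with c
    rw [clusterGraph_antipode]
    cases clusterGraph d a c <;> cases clusterGraph d b c <;> decide
  · convert card_filter_clusterGraph_ne_le hab using 3 with c
    cases clusterGraph d a c <;> cases clusterGraph d b c <;> decide

lemma clusterGraph_injective : Function.Injective (clusterGraph d) := by
  intro a b hab
  by_contra hne
  have ht : (b - a).val ≠ 0 := fun h => hne (sub_eq_zero.1 (Fin.ext h)).symm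
  -- `a + x` is a friend of exactly one of `a` and `b`
  set x : Fin (4 * d + 2) :=
    ⟨if (b - a).val ≤ d then d + 1 else if (b - a).val < 3 * d + 2 then 0 else 3 * d + 1,
      by split_ifs <;> omega⟩
  have := congrFun hab (a + x)
  rw [clusterGraph_apply, clusterGraph_apply, Fin.val_sub_eq_ite_of_sub a b, add_sub_cancel_left,
    decide_eq_decide] at this
  simp only [x] at this
  split_ifs at this <;> omega

lemma cycleGraph_adj_zero_iff_clusterGraph (hd : 1 ≤ d) (t : Fin (4 * d + 2)) :
    (SimpleGraph.cycleGraph (4 * d + 2)).Adj 0 t ↔ t ≠ 0 ∧ clusterGraph d 0 t = true ∧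
      ∃! x, clusterGraph d 0 x = true ∧ clusterGraph d t x = false := by
  rcases eq_or_ne t 0 with rfl | ht0
  · simp
  have hsum := Fin.val_sub_add_val_sub ht0.symm
  rw [zero_sub, sub_zero] at hsum
  simp only [SimpleGraph.cycleGraph_adj', clusterGraph_apply, zero_sub, sub_zero,
    Fin.val_sub_eq_ite, decide_eq_true_eq, decide_eq_false_iff_not, ne_eq, ht0,
    not_false_eq_true, true_and]
  constructor
  · intro hadj
    refine ⟨by omega, ⟨if t.val = 1 then 3 * d + 2 else d, by split_ifs <;> omega⟩,
      ?_, fun x hx => Fin.ext ?_⟩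
    · simp only
      split_ifs <;> omega
    · simp only at hx ⊢
      split_ifs at hx ⊢ <;> omega
  · rintro ⟨ht, huniq⟩
    by_contra hadj
    have := congrArg Fin.val (huniq.unique
      (y₁ := ⟨if t.val ≤ d then 3 * d + 2 else d - 1, by split_ifs <;> omega⟩)
      (y₂ := ⟨if t.val ≤ d then 3 * d + 3 else d, by split_ifs <;> omega⟩)
      (by simp only; split_ifs <;> omega) (by simp only; split_ifs <;> omega))
    simp only at this
    split_ifs at this <;> omega

lemma cycleGraph_adj_iff_clusterGraph (hd : 1 ≤ d) (a b : Fin (4 * d + 2)) :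
    (SimpleGraph.cycleGraph (4 * d + 2)).Adj a b ↔ a ≠ b ∧ clusterGraph d a b = true ∧
      ∃! c, clusterGraph d a c = true ∧ clusterGraph d b c = false := by
  obtain ⟨t, rfl⟩ : ∃ t, b = a + t := ⟨b - a, (add_sub_cancel a b).symm⟩
  have hC : ∀ x y, clusterGraph d (a + x) (a + y) = clusterGraph d x y :=
    clusterGraph_add_left a
  have hC₀ : ∀ y, clusterGraph d a (a + y) = clusterGraph d 0 y := fun y => by
    simpa using hC 0 y
  have hadj : (SimpleGraph.cycleGraph (4 * d + 2)).Adj a (a + t) ↔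
      (SimpleGraph.cycleGraph (4 * d + 2)).Adj 0 t := by
    simp only [SimpleGraph.cycleGraph_adj, sub_add_cancel_left, add_sub_cancel_left, zero_sub,
      sub_zero]
  rw [hadj, cycleGraph_adj_zero_iff_clusterGraph hd, hC₀, (Equiv.addLeft a).bijective.existsUnique_iff
    (p := fun c => clusterGraph d a c = true ∧ clusterGraph d (a + t) c = false)]
  simp only [Equiv.coe_addLeft, hC, hC₀, ne_eq, left_eq_add]

variable {F : Fin (4 * d + 2) → Fin (4 * d + 2)}

lemma injective_of_clusterGraph_hom
    (hF : ∀ a b, clusterGraph d (F a) (F b) = clusterGraph d a b) : Function.Injective F :=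
  fun a b h => clusterGraph_injective (funext fun c => by rw [← hF a c, ← hF b c, h])

lemma cycleGraph_adj_of_clusterGraph_hom (hd : 1 ≤ d)
    (hF : ∀ a b, clusterGraph d (F a) (F b) = clusterGraph d a b) {a b : Fin (4 * d + 2)}
    (hab : (SimpleGraph.cycleGraph (4 * d + 2)).Adj a b) :
    (SimpleGraph.cycleGraph (4 * d + 2)).Adj (F a) (F b) := by
  have hinj := injective_of_clusterGraph_hom hF
  rw [cycleGraph_adj_iff_clusterGraph hd] at hab ⊢
  obtain ⟨hne, hab, huniq⟩ := hab
  refine ⟨hinj.ne hne, by rwa [hF], ?_⟩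
  rw [(Finite.injective_iff_bijective.1 hinj).existsUnique_iff]
  simpa only [hF] using huniq

end ClusterGraph

section PairedGraph

variable {d : ℕ}

def pairCluster (u : Fin (8 * d + 4)) : Fin (4 * d + 2) := ⟨u / 2, by omega⟩

def pairVertex (c : Fin (4 * d + 2)) : Fin (8 * d + 4) := ⟨2 * c, by omega⟩

@[simp]
lemma pairCluster_pairVertex (c : Fin (4 * d + 2)) : pairCluster (pairVertex c) = c :=
  Fin.ext (by simp [pairCluster, pairVertex])

lemma card_filter_pairCluster_eq_le (c : Fin (4 * d + 2)) : #{u | pairCluster u = c} ≤ 2 := by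
  calc #{u | pairCluster u = c} ≤ #(range 2) := by
        refine card_le_card_of_injOn (fun u => u.val % 2) (fun u _ => ?_) (fun u hu v hv h => ?_)
        · simpa using Nat.mod_lt _ two_pos
        · simp only [coe_filter, mem_univ, true_and, Set.mem_ofPred_eq, pairCluster,
            Fin.ext_iff] at hu hv h
          omega
    _ = 2 := card_range 2

lemma eq_of_pairCluster_eq_of_ne {x y z : Fin (8 * d + 4)} (hx : pairCluster x = pairCluster z)
    (hy : pairCluster y = pairCluster z) (hxz : x ≠ z) (hyz : y ≠ z) : x = y := by
  simp only [pairCluster, Fin.ext_iff, ne_eq] at *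
  omega

def pairedGraph (d : ℕ) : SignedGraph (8 * d + 4) := circular pairCluster d

lemma pairedGraph_apply (u v : Fin (8 * d + 4)) :
    pairedGraph d u v = clusterGraph d (pairCluster u) (pairCluster v) := rfl

lemma symm_pairedGraph : Symm (pairedGraph d) := fun u v => by
  simp only [pairedGraph, circular, circDist_comm (pairCluster u)]

lemma pairedGraph_self (u : Fin (8 * d + 4)) : pairedGraph d u u = true := by
  simp [pairedGraph, circular, circDist]

lemma rank_pairedGraph_le (u v : Fin (8 * d + 4)) : rank (pairedGraph d) u v ≤ 4 * d :=
  (rank_comp_le (clusterGraph d) pairCluster card_filter_pairCluster_eq_le u v).trans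
    (by linarith [card_imbalanced_clusterGraph_le (d := d) (pairCluster u) (pairCluster v)])

lemma not_isBalanced_pairedGraph (hd : 1 ≤ d) : ¬IsBalanced (pairedGraph d) := by
  have henemy : ∀ a b : Fin (4 * d + 2), a.val + d < b.val → b.val < a.val + 3 * d + 2 →
      clusterGraph d a b = false := fun a b h₁ h₂ => by
    rw [clusterGraph_apply, Fin.sub_val_of_le (by omega : a ≤ b), decide_eq_false_iff_not]
    omega
  intro h
  have := h (pairVertex ⟨0, by omega⟩) (pairVertex ⟨d + 1, by omega⟩)
    (pairVertex ⟨2 * d + 2, by omega⟩) (by simp [pairVertex]) (by simp [pairVertex]; omega)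
    (by simp [pairVertex])
  simp only [BalancedTriad, pairedGraph_apply, pairCluster_pairVertex] at this
  rw [henemy _ _ (by simp) (by simp; omega), henemy _ _ (by simp; omega) (by simp; omega),
    henemy _ _ (by simp; omega) (by simp; omega)] at this
  simp at this

lemma isJammed_pairedGraph (hd : 1 ≤ d) : IsJammed (pairedGraph d) :=
  ⟨not_isBalanced_pairedGraph hd, fun u v _ => by have := rank_pairedGraph_le u v; omega⟩

lemma pairedGraph_eq_iff (u v : Fin (8 * d + 4)) :
    pairedGraph d u = pairedGraph d v ↔ pairCluster u = pairCluster v := by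
  refine ⟨fun h => clusterGraph_injective (funext fun c => ?_), fun h => funext fun x => ?_⟩
  · simpa [pairedGraph_apply] using congrFun h (pairVertex c)
  · rw [pairedGraph_apply, pairedGraph_apply, h]

end PairedGraph

section PairedGraphAut

variable {d : ℕ} {π π' : Equiv.Perm (Fin (8 * d + 4))}

def clusterMap (π : Equiv.Perm (Fin (8 * d + 4))) (c : Fin (4 * d + 2)) : Fin (4 * d + 2) :=
  pairCluster (π (pairVertex c))

lemma pairCluster_apply_eq_clusterMap (hπ : relabel (pairedGraph d) π = pairedGraph d)
    (u : Fin (8 * d + 4)) : pairCluster (π u) = clusterMap π (pairCluster u) := by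
  rw [clusterMap, ← pairedGraph_eq_iff, relabel_row_eq_iff hπ, pairedGraph_eq_iff,
    pairCluster_pairVertex]

lemma clusterGraph_clusterMap (hπ : relabel (pairedGraph d) π = pairedGraph d)
    (a b : Fin (4 * d + 2)) :
    clusterGraph d (clusterMap π a) (clusterMap π b) = clusterGraph d a b := by
  simpa [pairedGraph_apply, clusterMap] using
    congrFun (congrFun hπ (pairVertex a)) (pairVertex b)

def autCode (π : Equiv.Perm (Fin (8 * d + 4))) :
    Fin (4 * d + 2) × Bool × (Fin (4 * d + 2) → Bool) :=
  (clusterMap π 0, decide (clusterMap π 1 = clusterMap π 0 + 1),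
    fun c => decide ((π (pairVertex c)).val % 2 = 0))

lemma clusterMap_eq_of_autCode_eq (hd : 1 ≤ d) (hπ : relabel (pairedGraph d) π = pairedGraph d)
    (hπ' : relabel (pairedGraph d) π' = pairedGraph d)
    (h₀ : clusterMap π 0 = clusterMap π' 0)
    (h₁ : clusterMap π 1 = clusterMap π 0 + 1 ↔ clusterMap π' 1 = clusterMap π' 0 + 1) :
    clusterMap π = clusterMap π' := by
  -- bring `4 * d + 2` into the form `n + 3`
  obtain ⟨k, rfl⟩ : ∃ k, d = k + 1 := ⟨d - 1, by omega⟩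
  have hadj : ∀ a : Fin (4 * (k + 1) + 2),
      (SimpleGraph.cycleGraph (4 * (k + 1) + 2)).Adj a (a + 1) := fun a =>
    SimpleGraph.cycleGraph_adj.2 (Or.inr (add_sub_cancel_left a 1))
  exact eq_of_cycleGraph_adj (n := 4 * k + 3)
    (injective_of_clusterGraph_hom (clusterGraph_clusterMap hπ))
    (injective_of_clusterGraph_hom (clusterGraph_clusterMap hπ'))
    (fun a => cycleGraph_adj_of_clusterGraph_hom hd (clusterGraph_clusterMap hπ) (hadj a))
    (fun a => cycleGraph_adj_of_clusterGraph_hom hd (clusterGraph_clusterMap hπ') (hadj a))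
    h₀ h₁

lemma eq_of_autCode_eq (hd : 1 ≤ d) (hπ : relabel (pairedGraph d) π = pairedGraph d)
    (hπ' : relabel (pairedGraph d) π' = pairedGraph d) (h : autCode π = autCode π') :
    π = π' := by
  simp only [autCode, Prod.mk.injEq, decide_eq_decide, funext_iff] at h
  obtain ⟨h₀, h₁, hpar⟩ := h
  have hF := clusterMap_eq_of_autCode_eq hd hπ hπ' h₀ h₁
  have hv : ∀ c, π (pairVertex c) = π' (pairVertex c) := fun c => by
    have hc := congrFun hF c
    have := hpar c
    simp only [clusterMap, pairCluster, Fin.ext_iff] at hc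
    exact Fin.ext (by omega)
  have hcl : ∀ u, pairCluster (π' u) = pairCluster (π (pairVertex (pairCluster u))) := fun u => by
    rw [hv, pairCluster_apply_eq_clusterMap hπ', pairCluster_apply_eq_clusterMap hπ',
      pairCluster_pairVertex]
  ext u : 1
  by_cases hu : u = pairVertex (pairCluster u)
  · rw [hu, hv]
  · refine eq_of_pairCluster_eq_of_ne ?_ (hcl u) (π.injective.ne hu) ?_
    · rw [pairCluster_apply_eq_clusterMap hπ, pairCluster_apply_eq_clusterMap hπ,
        pairCluster_pairVertex]
    · rw [hv]
      exact π'.injective.ne hu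

lemma card_aut_pairedGraph_le (hd : 1 ≤ d) :
    #{π | relabel (pairedGraph d) π = pairedGraph d} ≤ (8 * d + 4) * 2 ^ (4 * d + 2) := by
  calc #{π | relabel (pairedGraph d) π = pairedGraph d}
      ≤ #(univ : Finset (Fin (4 * d + 2) × Bool × (Fin (4 * d + 2) → Bool))) :=
        card_le_card_of_injOn autCode (fun _ _ => mem_univ _) fun π hπ π' hπ' h =>
          eq_of_autCode_eq hd (by simpa using hπ) (by simpa using hπ') h
    _ = (8 * d + 4) * 2 ^ (4 * d + 2) := by
      simp only [card_univ, Fintype.card_prod, Fintype.card_fin, Fintype.card_bool,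
        Fintype.card_fun]
      ring

end PairedGraphAut

/-- For `d ≥ 1` and `n = 8d + 4`, there are at least `(n-1)! / 2^(n/2)`
jammed signed graphs on `n` labeled vertices. -/
theorem counting_jammed (d : ℕ) (hd : 1 ≤ d) :
    ((Nat.factorial (8 * d + 3) : ℝ) / 2 ^ (4 * d + 2)) ≤
      (Nat.card {G : SignedGraph (8 * d + 4) //
        Symm G ∧ (∀ u, G u u = true) ∧ IsJammed G} : ℝ) := by
  classical
  set N := Nat.card {G : SignedGraph (8 * d + 4) // Symm G ∧ (∀ u, G u u = true) ∧ IsJammed G}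
    with hN
  have himage : #(univ.image (relabel (pairedGraph d))) ≤ N := by
    rw [hN, Nat.card_eq_fintype_card, Fintype.card_subtype]
    refine card_le_card fun G hG => ?_
    obtain ⟨σ, -, rfl⟩ := mem_image.1 hG
    exact mem_filter.2 ⟨mem_univ _, symm_pairedGraph.relabel σ, fun u => pairedGraph_self _,
      (isJammed_pairedGraph hd).relabel σ⟩
  have hcount : (8 * d + 4) * (8 * d + 3).factorial ≤ (8 * d + 4) * (N * 2 ^ (4 * d + 2)) :=
    calc (8 * d + 4) * (8 * d + 3).factorial = (8 * d + 4).factorial := rfl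
      _ ≤ _ := factorial_le_card_image_relabel_mul (pairedGraph d)
      _ ≤ N * ((8 * d + 4) * 2 ^ (4 * d + 2)) :=
        Nat.mul_le_mul himage (card_aut_pairedGraph_le hd)
      _ = (8 * d + 4) * (N * 2 ^ (4 * d + 2)) := by ring
  rw [div_le_iff₀ (by positivity)]
  exact_mod_cast Nat.le_of_mul_le_mul_left hcount (by omega)
end

section
/- Let n ≥ 12 be divisible by 3 and let E_0 be a set of edges of the complete graph on the n vertices of J_n such that every vertex is incident to at most n/12 − 1 edges of E_0. Let S_n be the signed graph obtained from J_n by flipping exactly the edges of E_0. Then every maximal sequence of CTD-admissible flips starting from S_n is finite, has length exactly |E_0|, flips each edge of E_0 exactly once and no other edge, and terminates in the state J_n. -/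
open Finset

/-! In `J_n` an edge lies in at most `n/3` imbalanced triads (those whose third vertex lies in
the third cluster), so after flipping it lies in at least `2n/3 - 2`. Flipping the edges of a set
`F` changes the rank of `uv` by at most the number of `F`-edges at `u` and `v`, which is below
`n/6` when every `F`-degree is at most `n/12 - 1`. Hence in `J_n` perturbed by any `F ⊆ E₀` the
CTD-admissible flips are exactly the edges of `F`, and flipping one of them leaves `J_n`
perturbed by `F` minus that edge; following a flip sequence edge by edge gives the theorem. -/

section Rank

variable {n : ℕ}

def thirdVertices (u v : Fin n) : Finset (Fin n) := univ.filter fun w => w ≠ u ∧ w ≠ v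

lemma card_thirdVertices {u v : Fin n} (huv : u ≠ v) : #(thirdVertices u v) = n - 2 := by
  have : thirdVertices u v = ({u, v} : Finset (Fin n))ᶜ := by ext; simp [thirdVertices]
  rw [this, card_compl, Fintype.card_fin, card_pair huv]

lemma rank_eq_card_filter (G : SignedGraph n) (u v : Fin n) :
    rank G u v = #((thirdVertices u v).filter fun w => ¬ BalancedTriad G u v w) := by
  simp only [rank, thirdVertices, filter_filter, and_assoc]

lemma flipEdge_apply_left (G : SignedGraph n) {u v w : Fin n} (hw : w ≠ v) :
    flipEdge G s(u, v) u w = G u w :=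
  if_neg fun h => hw (Sym2.congr_right.mp h)

lemma flipEdge_apply_right (G : SignedGraph n) {u v w : Fin n} (hw : w ≠ u) :
    flipEdge G s(u, v) v w = G v w :=
  if_neg fun h => hw (Sym2.congr_left.mp (Sym2.eq_swap.trans h))

/-- Flipping `uv` turns every triad on `uv` from balanced to imbalanced and vice versa. -/
lemma rank_flipEdge_add_rank (G : SignedGraph n) {u v : Fin n} (huv : u ≠ v) :
    rank (flipEdge G s(u, v)) u v + rank G u v = n - 2 := by
  have hbal : ∀ w ∈ thirdVertices u v,
      (¬ BalancedTriad (flipEdge G s(u, v)) u v w ↔ BalancedTriad G u v w) := by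
    intro w hw
    obtain ⟨hwu, hwv⟩ : w ≠ u ∧ w ≠ v := by simpa [thirdVertices] using hw
    have huv' : flipEdge G s(u, v) u v = !G u v := if_pos rfl
    simp only [BalancedTriad, huv', flipEdge_apply_left G hwv, flipEdge_apply_right G hwu]
    cases G u v <;> cases G v w <;> cases G u w <;> decide
  rw [rank_eq_card_filter, rank_eq_card_filter, filter_congr hbal,
    card_filter_add_card_filter_not, card_thirdVertices huv]

lemma rank_le_rank_add_card {G G' : SignedGraph n} {u v : Fin n} (D : Finset (Fin n))
    (huv : G u v = G' u v) (hD : ∀ w ∉ D, G u w = G' u w ∧ G v w = G' v w) :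
    rank G u v ≤ rank G' u v + #D := by
  rw [rank_eq_card_filter, rank_eq_card_filter]
  refine (card_le_card fun w hw => ?_).trans (card_union_le _ _)
  by_cases hwD : w ∈ D
  · exact mem_union_right _ hwD
  · obtain ⟨hu, hv⟩ := hD w hwD
    simp only [mem_filter, BalancedTriad, huv, hu, hv] at hw
    exact mem_union_left _ (mem_filter.mpr hw)

end Rank

section Perturb

variable {α : Type*} [DecidableEq α]

def edgeDegree (F : Finset (Sym2 α)) (u : α) : ℕ := #(F.filter (u ∈ ·))

lemma edgeDegree_mono {F F' : Finset (Sym2 α)} (h : F' ⊆ F) (u : α) :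
    edgeDegree F' u ≤ edgeDegree F u :=
  card_le_card (filter_subset_filter _ h)

variable [Fintype α]

def edgeNeighbors (F : Finset (Sym2 α)) (u : α) : Finset α := univ.filter fun w => s(u, w) ∈ F

lemma card_edgeNeighbors_le (F : Finset (Sym2 α)) (u : α) :
    #(edgeNeighbors F u) ≤ edgeDegree F u :=
  card_le_card_of_injOn (s(u, ·))
    (fun w hw => by simpa [edgeNeighbors, edgeDegree] using hw)
    (fun _ _ _ _ h => Sym2.congr_right.mp h)

lemma card_edgeNeighbors_union_le (F : Finset (Sym2 α)) (u v : α) :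
    #(edgeNeighbors F u ∪ edgeNeighbors F v) ≤ edgeDegree F u + edgeDegree F v :=
  (card_union_le _ _).trans (add_le_add (card_edgeNeighbors_le F u) (card_edgeNeighbors_le F v))

variable {n : ℕ}

lemma perturb_empty (G : SignedGraph n) : perturb G ∅ = G := by
  funext x y
  simp [perturb]

lemma flipEdge_perturb (G : SignedGraph n) {F : Finset (Sym2 (Fin n))} {p : Sym2 (Fin n)}
    (hp : p ∈ F) : flipEdge (perturb G F) p = perturb G (F.erase p) := by
  funext x y
  by_cases h : s(x, y) = p
  · simp [flipEdge, perturb, h, hp]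
  · simp [flipEdge, perturb, h]

lemma perturb_eq_of_notMem_edgeNeighbors (G : SignedGraph n) (F : Finset (Sym2 (Fin n)))
    {u v w : Fin n} (hw : w ∉ edgeNeighbors F u ∪ edgeNeighbors F v) :
    perturb G F u w = G u w ∧ perturb G F v w = G v w := by
  simp_all [edgeNeighbors, perturb]

lemma rank_perturb_le (G : SignedGraph n) (F : Finset (Sym2 (Fin n))) {u v : Fin n}
    (hp : s(u, v) ∉ F) :
    rank (perturb G F) u v ≤ rank G u v + (edgeDegree F u + edgeDegree F v) := by
  refine (rank_le_rank_add_card _ (by simp [perturb, hp])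
    fun w hw => perturb_eq_of_notMem_edgeNeighbors G F hw).trans ?_
  exact Nat.add_le_add_left (card_edgeNeighbors_union_le F u v) _

lemma rank_flipEdge_le_rank_perturb (G : SignedGraph n) (F : Finset (Sym2 (Fin n)))
    {u v : Fin n} (hp : s(u, v) ∈ F) :
    rank (flipEdge G s(u, v)) u v ≤
      rank (perturb G F) u v + (edgeDegree F u + edgeDegree F v) := by
  refine (rank_le_rank_add_card (G' := perturb G F) (edgeNeighbors F u ∪ edgeNeighbors F v)
    (by simp [perturb, flipEdge, hp]) fun w hw => ?_).trans ?_
  · have hv : v ∈ edgeNeighbors F u := by simpa [edgeNeighbors] using hp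
    have hu : u ∈ edgeNeighbors F v := by simpa [edgeNeighbors, Sym2.eq_swap] using hp
    have hwv : w ≠ v := by rintro rfl; exact hw (mem_union_left _ hv)
    have hwu : w ≠ u := by rintro rfl; exact hw (mem_union_right _ hu)
    obtain ⟨huw, hvw⟩ := perturb_eq_of_notMem_edgeNeighbors G F hw
    rw [flipEdge_apply_left G hwv, flipEdge_apply_right G hwu, huw, hvw]
    exact ⟨rfl, rfl⟩
  exact Nat.add_le_add_left (card_edgeNeighbors_union_le F u v) _

end Perturb

section Jn

variable {n : ℕ}

def cluster (n : ℕ) (u : Fin n) : ℕ := u.val / (n / 3)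

lemma cluster_lt_three (h3 : 3 ∣ n) (u : Fin n) : cluster n u < 3 := by
  obtain ⟨m, rfl⟩ := h3
  have := u.isLt
  rw [cluster, Nat.mul_div_cancel_left m (by norm_num), Nat.div_lt_iff_lt_mul (by omega)]
  omega

lemma card_filter_div_eq_le {m : ℕ} (hm : 0 < m) (i : ℕ) :
    #(univ.filter fun w : Fin n => w.val / m = i) ≤ m := by
  refine (card_le_card_of_injOn (fun w => w.val % m) (t := range m)
    (fun w _ => mem_range.mpr (Nat.mod_lt _ hm)) fun a ha b hb h => Fin.ext ?_).trans_eq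
    (card_range m)
  rw [← Nat.div_add_mod a m, ← Nat.div_add_mod b m, (mem_filter.mp (mem_coe.mp ha)).2,
    (mem_filter.mp (mem_coe.mp hb)).2]
  exact congrArg _ h

lemma cluster_ne_of_not_balancedTriad_Jn {u v w : Fin n}
    (h : ¬ BalancedTriad (Jn n) u v w) :
    cluster n u ≠ cluster n v ∧ cluster n v ≠ cluster n w ∧ cluster n u ≠ cluster n w := by
  change ¬ (decide (cluster n u = cluster n v) ^^ (decide (cluster n v = cluster n w) ^^
    decide (cluster n u = cluster n w))) = true at h
  grind

lemma rank_Jn_le (h3 : 3 ∣ n) (u v : Fin n) : rank (Jn n) u v ≤ n / 3 := by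
  have hm : 0 < n / 3 := by obtain ⟨m, rfl⟩ := h3; have := u.isLt; omega
  refine (card_le_card fun w hw => ?_).trans (card_filter_div_eq_le hm
    (3 - cluster n u - cluster n v))
  obtain ⟨-, -, hw⟩ := (mem_filter.mp hw).2
  have := cluster_ne_of_not_balancedTriad_Jn hw
  have := cluster_lt_three h3 u
  have := cluster_lt_three h3 v
  have := cluster_lt_three h3 w
  refine mem_filter.mpr ⟨mem_univ w, ?_⟩
  change cluster n w = _
  omega

end Jn

section SparsePerturbation

variable {n : ℕ} {F : Finset (Sym2 (Fin n))}

lemma two_mul_rank_perturb_Jn_lt (h3 : 3 ∣ n) (hF : ∀ u, 12 * edgeDegree F u + 12 ≤ n)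
    {u v : Fin n} (hp : s(u, v) ∉ F) : 2 * rank (perturb (Jn n) F) u v < n - 2 := by
  have := rank_perturb_le (Jn n) F hp
  have := rank_Jn_le h3 u v
  have := hF u
  have := hF v
  omega

lemma le_two_mul_rank_perturb_Jn (h3 : 3 ∣ n) (hF : ∀ u, 12 * edgeDegree F u + 12 ≤ n)
    {u v : Fin n} (huv : u ≠ v) (hp : s(u, v) ∈ F) :
    n - 2 ≤ 2 * rank (perturb (Jn n) F) u v ∧ 0 < rank (perturb (Jn n) F) u v := by
  have := rank_flipEdge_add_rank (Jn n) huv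
  have := rank_flipEdge_le_rank_perturb (Jn n) F hp
  have := rank_Jn_le h3 u v
  have := hF u
  have := hF v
  omega

lemma ctdAdmissible_perturb_Jn_iff (h3 : 3 ∣ n) (hF : ∀ u, 12 * edgeDegree F u + 12 ≤ n)
    (hdiag : ∀ p ∈ F, ¬ p.IsDiag) (p : Sym2 (Fin n)) :
    CTDAdmissible (perturb (Jn n) F) p ↔ p ∈ F := by
  constructor
  · rintro ⟨u, v, rfl, -, -, hrank⟩
    by_contra hp
    have := two_mul_rank_perturb_Jn_lt h3 hF hp
    omega
  · induction p using Sym2.ind with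
    | _ u v =>
      intro hp
      have huv : u ≠ v := fun h => hdiag _ hp (Sym2.mk_isDiag_iff.mpr h)
      obtain ⟨hrank, hpos⟩ := le_two_mul_rank_perturb_Jn h3 hF huv hp
      obtain ⟨w, hw⟩ := card_pos.mp hpos
      exact ⟨u, v, rfl, huv, ⟨w, (mem_filter.mp hw).2⟩, hrank⟩

end SparsePerturbation

namespace FlipSeq

variable {n : ℕ} {Adm : SignedGraph n → Sym2 (Fin n) → Prop} {G H : SignedGraph n}
  {F : Finset (Sym2 (Fin n))} {L : List (Sym2 (Fin n))}

theorem perturb_sdiff_toFinset (hAdm : ∀ F' ⊆ F, ∀ p, Adm (perturb G F') p ↔ p ∈ F')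
    (h : FlipSeq Adm (perturb G F) L H) :
    L.Nodup ∧ L.toFinset ⊆ F ∧ H = perturb G (F \ L.toFinset) := by
  generalize hS : perturb G F = S at h
  induction h generalizing F with
  | nil => exact ⟨List.nodup_nil, by simp, by simp [hS]⟩
  | @cons _ _ tail p hp _ ih =>
    subst hS
    have hpF : p ∈ F := (hAdm F subset_rfl p).mp hp
    obtain ⟨hnd, hsub, hH⟩ := ih (fun F' hF' => hAdm F' (hF'.trans (erase_subset p F)))
      (flipEdge_perturb G hpF).symm
    have hpL : p ∉ tail := fun h => by simpa using hsub (List.mem_toFinset.mpr h)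
    refine ⟨List.nodup_cons.mpr ⟨hpL, hnd⟩, ?_, ?_⟩
    · rw [List.toFinset_cons]
      exact insert_subset hpF (hsub.trans (erase_subset p F))
    · rw [hH, List.toFinset_cons, erase_sdiff_comm, sdiff_insert]

theorem length_le_card (hAdm : ∀ F' ⊆ F, ∀ p, Adm (perturb G F') p ↔ p ∈ F')
    (h : FlipSeq Adm (perturb G F) L H) : L.length ≤ #F := by
  obtain ⟨hnd, hsub, -⟩ := h.perturb_sdiff_toFinset hAdm
  rw [← List.toFinset_card_of_nodup hnd]
  exact card_le_card hsub

theorem eq_of_forall_not_admissible (hAdm : ∀ F' ⊆ F, ∀ p, Adm (perturb G F') p ↔ p ∈ F')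
    (h : FlipSeq Adm (perturb G F) L H) (hmax : ∀ p, ¬ Adm H p) :
    L.length = #F ∧ L.Nodup ∧ L.toFinset = F ∧ H = G := by
  obtain ⟨hnd, hsub, rfl⟩ := h.perturb_sdiff_toFinset hAdm
  have hempty : F \ L.toFinset = ∅ :=
    eq_empty_of_forall_notMem fun p hp => hmax p ((hAdm _ sdiff_subset p).mpr hp)
  have hL : L.toFinset = F := hsub.antisymm (sdiff_eq_empty_iff_subset.mp hempty)
  exact ⟨hL ▸ (List.toFinset_card_of_nodup hnd).symm, hnd, hL, by rw [hempty, perturb_empty]⟩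

end FlipSeq

theorem ctd_escapes_back_to_Jn_general (n : ℕ) (h3 : 3 ∣ n)
    (E0 : Finset (Sym2 (Fin n))) (hE0 : ∀ p ∈ E0, ¬ p.IsDiag)
    (hdeg : ∀ u : Fin n, ((E0.filter (fun p => u ∈ p)).card : ℝ) ≤ (n : ℝ) / 12 - 1) :
    (∀ (L : List (Sym2 (Fin n))) (H : SignedGraph n),
      FlipSeq CTDAdmissible (perturb (Jn n) E0) L H → L.length ≤ E0.card) ∧
    (∀ (L : List (Sym2 (Fin n))) (H : SignedGraph n),
      FlipSeq CTDAdmissible (perturb (Jn n) E0) L H →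
      (∀ p, ¬ CTDAdmissible H p) →
      L.length = E0.card ∧ L.Nodup ∧ L.toFinset = E0 ∧ H = Jn n) := by
  have hsparse : ∀ u, 12 * edgeDegree E0 u + 12 ≤ n := fun u => by
    have : (12 * edgeDegree E0 u + 12 : ℝ) ≤ n := by
      have := hdeg u
      rw [edgeDegree]
      linarith
    exact_mod_cast this
  have hAdm : ∀ F ⊆ E0, ∀ p, CTDAdmissible (perturb (Jn n) F) p ↔ p ∈ F := fun F hF =>
    ctdAdmissible_perturb_Jn_iff h3 (fun u => (Nat.add_le_add_right (Nat.mul_le_mul_left 12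
      (edgeDegree_mono hF u)) 12).trans (hsparse u)) fun p hp => hE0 p (hF hp)
  exact ⟨fun L H h => h.length_le_card hAdm,
    fun L H h hmax => h.eq_of_forall_not_admissible hAdm hmax⟩

/-- From `S_n` (which is `J_n` with a sparse edge set `E_0` flipped), every
maximal sequence of CTD-admissible flips is finite, has length `|E_0|`, flips each edge
of `E_0` exactly once and no other edge, and terminates in `J_n`. -/
theorem ctd_escapes_back_to_Jn (n : ℕ) (hn : 12 ≤ n) (h3 : 3 ∣ n)
    (E0 : Finset (Sym2 (Fin n))) (hE0 : ∀ p ∈ E0, ¬ p.IsDiag)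
    (hdeg : ∀ u : Fin n, ((E0.filter (fun p => u ∈ p)).card : ℝ) ≤ (n : ℝ) / 12 - 1) :
    (∀ (L : List (Sym2 (Fin n))) (H : SignedGraph n),
      FlipSeq CTDAdmissible (perturb (Jn n) E0) L H → L.length ≤ E0.card) ∧
    (∀ (L : List (Sym2 (Fin n))) (H : SignedGraph n),
      FlipSeq CTDAdmissible (perturb (Jn n) E0) L H →
      (∀ p, ¬ CTDAdmissible H p) →
      L.length = E0.card ∧ L.Nodup ∧ L.toFinset = E0 ∧ H = Jn n) :=
  ctd_escapes_back_to_Jn_general n h3 E0 hE0 hdeg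
end

section
/- Let G be a signed graph on n vertices, let C be a closest balanced state to G, let k be the number of edges on which G and C differ (the red edges), and suppose that either (1) every vertex is incident to at most n/4 − 1 red edges, or (2) the set of vertices incident to at least one red edge has size at most n/2. Then every maximal sequence of BED-admissible flips starting from G has length exactly k, flips each red edge exactly once and no other edge, and terminates in the balanced state C. -/
open Finset

/-!
Since `C` is balanced, a triad of `G` is imbalanced exactly when it contains an odd number of
red edges. A red edge `uv` is therefore the heaviest edge of every triad `uvw` whose other two
edges are black, and under either sparsity condition it has so many such apexes `w` that its rank
exceeds a threshold bounding the rank of every black edge: a black edge lies only in triads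
closed by a red edge at one of its endpoints. Hence the BED-admissible flips are exactly the red
edges. Flipping a red edge only shrinks the red set, so the sparsity condition persists, and
induction along the flip sequence removes the red edges one at a time.
-/

section RedEdges

variable {n : ℕ} {G C : SignedGraph n}

def redNbrs (G C : SignedGraph n) (u : Fin n) : Finset (Fin n) :=
  univ.filter (fun v => v ≠ u ∧ G u v ≠ C u v)

def redVertices (G C : SignedGraph n) : Finset (Fin n) :=
  univ.filter (fun u => ∃ v, v ≠ u ∧ G u v ≠ C u v)

def blackApexes (G C : SignedGraph n) (u v : Fin n) : Finset (Fin n) :=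
  univ.filter (fun w => w ≠ u ∧ w ≠ v ∧ G u w = C u w ∧ G v w = C v w)

/-- Counting apexes rather than ranks on the red side also provides, for each red edge, the
triad in which it is BED-admissible. -/
def RedDominant (G C : SignedGraph n) : Prop :=
  ∃ t, (∀ u v, u ≠ v → G u v ≠ C u v → t < #(blackApexes G C u v)) ∧
    ∀ x y, x ≠ y → G x y = C x y → rank G x y ≤ t

def SparseRed (G C : SignedGraph n) : Prop :=
  (∀ u, (#(redNbrs G C u) : ℝ) ≤ (n : ℝ) / 4 - 1) ∨ (#(redVertices G C) : ℝ) ≤ (n : ℝ) / 2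

theorem mem_redNbrs {u v : Fin n} : v ∈ redNbrs G C u ↔ v ≠ u ∧ G u v ≠ C u v := by
  simp [redNbrs]

theorem mem_redVertices {u : Fin n} : u ∈ redVertices G C ↔ ∃ v, v ≠ u ∧ G u v ≠ C u v := by
  simp [redVertices]

theorem mem_blackApexes {u v w : Fin n} :
    w ∈ blackApexes G C u v ↔ w ≠ u ∧ w ≠ v ∧ G u w = C u w ∧ G v w = C v w := by
  simp [blackApexes]

theorem red_comm (hG : Symm G) (hC : Symm C) {a b : Fin n} :
    G a b ≠ C a b ↔ G b a ≠ C b a := by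
  rw [hG, hC]

theorem mem_diffEdges (hG : Symm G) (hC : Symm C) {a b : Fin n} :
    s(a, b) ∈ diffEdges G C ↔ a ≠ b ∧ G a b ≠ C a b := by
  simp only [diffEdges, mem_filter, mem_univ, true_and]
  constructor
  · rintro ⟨u, v, huv, hne, hred⟩
    rcases Sym2.eq_iff.1 huv with ⟨rfl, rfl⟩ | ⟨rfl, rfl⟩
    · exact ⟨hne, hred⟩
    · exact ⟨hne.symm, (red_comm hG hC).1 hred⟩
  · rintro ⟨hab, hred⟩
    exact ⟨a, b, rfl, hab, hred⟩

theorem not_balancedTriad_of_red (hCb : IsBalanced C) {u v w : Fin n} (huv : u ≠ v)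
    (hvw : v ≠ w) (huw : u ≠ w) (hred : G u v ≠ C u v) (hvw' : G v w = C v w)
    (huw' : G u w = C u w) : ¬ BalancedTriad G u v w := by
  have hc := hCb u v w huv hvw huw
  unfold BalancedTriad at hc ⊢
  revert hc hred hvw' huw'
  generalize G u v = a, G v w = b, G u w = c, C u v = a', C v w = b', C u w = c'
  decide +revert

theorem red_of_not_balancedTriad_of_black (hCb : IsBalanced C) {u v w : Fin n} (huv : u ≠ v)
    (hvw : v ≠ w) (huw : u ≠ w) (hblack : G u v = C u v) (h : ¬ BalancedTriad G u v w) :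
    G v w ≠ C v w ∨ G u w ≠ C u w := by
  have hc := hCb u v w huv hvw huw
  unfold BalancedTriad at hc h
  revert hc hblack h
  generalize G u v = a, G v w = b, G u w = c, C u v = a', C v w = b', C u w = c'
  decide +revert


theorem card_blackApexes_le_rank (hCb : IsBalanced C) {u v : Fin n} (huv : u ≠ v)
    (hred : G u v ≠ C u v) : #(blackApexes G C u v) ≤ rank G u v := by
  unfold rank
  refine card_le_card fun w hw => ?_
  obtain ⟨hwu, hwv, hu, hv⟩ := mem_blackApexes.1 hw
  exact mem_filter.2
    ⟨mem_univ _, hwu, hwv, not_balancedTriad_of_red hCb huv hwv.symm hwu.symm hred hv hu⟩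

theorem rank_le_card_redNbrs_union (hCb : IsBalanced C) {x y : Fin n} (hxy : x ≠ y)
    (hblack : G x y = C x y) : rank G x y ≤ #(redNbrs G C x ∪ redNbrs G C y) := by
  unfold rank
  refine card_le_card fun w hw => ?_
  obtain ⟨hwx, hwy, himb⟩ := (mem_filter.1 hw).2
  rcases red_of_not_balancedTriad_of_black hCb hxy hwy.symm hwx.symm hblack himb with h | h
  · exact mem_union_right _ (mem_redNbrs.2 ⟨hwy, h⟩)
  · exact mem_union_left _ (mem_redNbrs.2 ⟨hwx, h⟩)

theorem compl_redNbrs_union_subset_blackApexes (hG : Symm G) (hC : Symm C) {u v : Fin n}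
    (huv : u ≠ v) (hred : G u v ≠ C u v) :
    (redNbrs G C u ∪ redNbrs G C v)ᶜ ⊆ blackApexes G C u v := by
  intro w hw
  simp only [mem_compl, mem_union, mem_redNbrs, not_or, not_and, not_not] at hw
  have hwu : w ≠ u := by
    rintro rfl
    exact (red_comm hG hC).1 hred (hw.2 huv)
  have hwv : w ≠ v := by
    rintro rfl
    exact hred (hw.1 huv.symm)
  exact mem_blackApexes.2 ⟨hwu, hwv, hw.1 hwu, hw.2 hwv⟩

theorem sub_card_redNbrs_union_le_card_blackApexes (hG : Symm G) (hC : Symm C) {u v : Fin n}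
    (huv : u ≠ v) (hred : G u v ≠ C u v) :
    n - #(redNbrs G C u ∪ redNbrs G C v) ≤ #(blackApexes G C u v) := by
  have := card_le_card (compl_redNbrs_union_subset_blackApexes hG hC huv hred)
  rwa [card_compl, Fintype.card_fin] at this

theorem redNbrs_subset_redVertices (hG : Symm G) (hC : Symm C) (u : Fin n) :
    redNbrs G C u ⊆ redVertices G C := fun v hv => by
  obtain ⟨hvu, hred⟩ := mem_redNbrs.1 hv
  exact mem_redVertices.2 ⟨u, hvu.symm, (red_comm hG hC).1 hred⟩

theorem mem_redVertices_of_mem_redNbrs {u v : Fin n} (hv : v ∈ redNbrs G C u) :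
    u ∈ redVertices G C :=
  mem_redVertices.2 ⟨v, mem_redNbrs.1 hv⟩

theorem card_redNbrs_union_le_card_redVertices_sub_one (hG : Symm G) (hC : Symm C)
    {x y : Fin n} (hblack : G x y = C x y) :
    #(redNbrs G C x ∪ redNbrs G C y) ≤ #(redVertices G C) - 1 := by
  rcases (redNbrs G C x ∪ redNbrs G C y).eq_empty_or_nonempty with h | ⟨w, hw⟩
  · simp [h]
  have hsub : redNbrs G C x ∪ redNbrs G C y ⊆ redVertices G C :=
    union_subset (redNbrs_subset_redVertices hG hC x) (redNbrs_subset_redVertices hG hC y)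
  have hblack' : G y x = C y x := by rw [hG, hC]; exact hblack
  have hx : x ∉ redNbrs G C x ∪ redNbrs G C y := by simp [mem_redNbrs, hblack']
  have hy : y ∉ redNbrs G C x ∪ redNbrs G C y := by simp [mem_redNbrs, hblack]
  suffices #(redNbrs G C x ∪ redNbrs G C y) < #(redVertices G C) by omega
  refine card_lt_card ((ssubset_iff_of_subset hsub).2 ?_)
  rcases mem_union.1 hw with hw | hw
  · exact ⟨x, mem_redVertices_of_mem_redNbrs hw, hx⟩
  · exact ⟨y, mem_redVertices_of_mem_redNbrs hw, hy⟩

theorem redDominant_of_card_redNbrs_le (hG : Symm G) (hC : Symm C) (hCb : IsBalanced C)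
    (h : ∀ u, 4 * #(redNbrs G C u) + 4 ≤ n) : RedDominant G C := by
  refine ⟨n / 2 - 2, fun u v huv hred => ?_, fun x y hxy hblack => ?_⟩
  · have := sub_card_redNbrs_union_le_card_blackApexes hG hC huv hred
    have := card_union_le (redNbrs G C u) (redNbrs G C v)
    have := h u
    have := h v
    omega
  · have := rank_le_card_redNbrs_union hCb hxy hblack
    have := card_union_le (redNbrs G C x) (redNbrs G C y)
    have := h x
    have := h y
    omega

theorem redDominant_of_card_redVertices_le (hG : Symm G) (hC : Symm C) (hCb : IsBalanced C)
    (h : 2 * #(redVertices G C) ≤ n) : RedDominant G C := by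
  refine ⟨#(redVertices G C) - 1, fun u v huv hred => ?_, fun x y hxy hblack => ?_⟩
  · have := sub_card_redNbrs_union_le_card_blackApexes hG hC huv hred
    have := card_le_card
      (union_subset (redNbrs_subset_redVertices hG hC u) (redNbrs_subset_redVertices hG hC v))
    have : 0 < #(redVertices G C) := card_pos.2 ⟨u, mem_redVertices.2 ⟨v, huv.symm, hred⟩⟩
    omega
  · exact (rank_le_card_redNbrs_union hCb hxy hblack).trans
      (card_redNbrs_union_le_card_redVertices_sub_one hG hC hblack)

theorem redDominant_of_sparseRed (hG : Symm G) (hC : Symm C) (hCb : IsBalanced C)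
    (h : SparseRed G C) : RedDominant G C := by
  rcases h with h | h
  · refine redDominant_of_card_redNbrs_le hG hC hCb fun u => ?_
    have := h u
    exact_mod_cast (by push_cast; linarith : ((4 * #(redNbrs G C u) + 4 : ℕ) : ℝ) ≤ n)
  · refine redDominant_of_card_redVertices_le hG hC hCb ?_
    exact_mod_cast (by push_cast; linarith : ((2 * #(redVertices G C) : ℕ) : ℝ) ≤ n)


theorem RedDominant.rank_lt_rank (hCb : IsBalanced C) (h : RedDominant G C) {u v x y : Fin n}
    (huv : u ≠ v) (hred : G u v ≠ C u v) (hxy : x ≠ y) (hblack : G x y = C x y) :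
    rank G x y < rank G u v := by
  obtain ⟨t, hredt, hblackt⟩ := h
  exact ((hblackt x y hxy hblack).trans_lt (hredt u v huv hred)).trans_le
    (card_blackApexes_le_rank hCb huv hred)

theorem RedDominant.blackApexes_nonempty (h : RedDominant G C) {u v : Fin n} (huv : u ≠ v)
    (hred : G u v ≠ C u v) : (blackApexes G C u v).Nonempty := by
  obtain ⟨t, hredt, -⟩ := h
  exact card_pos.1 ((Nat.zero_le t).trans_lt (hredt u v huv hred))

theorem RedDominant.bedAdmissible_iff (hG : Symm G) (hC : Symm C) (hCb : IsBalanced C)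
    (h : RedDominant G C) {p : Sym2 (Fin n)} : BEDAdmissible G p ↔ p ∈ diffEdges G C := by
  constructor
  · rintro ⟨u, v, w, rfl, huv, hwu, hwv, himb, hvw_le, huw_le⟩
    refine (mem_diffEdges hG hC).2 ⟨huv, fun hblack => ?_⟩
    rcases red_of_not_balancedTriad_of_black hCb huv hwv.symm hwu.symm hblack himb with h' | h'
    · exact (h.rank_lt_rank hCb hwv.symm h' huv hblack).not_ge hvw_le
    · exact (h.rank_lt_rank hCb hwu.symm h' huv hblack).not_ge huw_le
  · intro hp
    obtain ⟨u, v, rfl, huv, hred⟩ := (mem_filter.1 hp).2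
    obtain ⟨w, hw⟩ := h.blackApexes_nonempty huv hred
    obtain ⟨hwu, hwv, hu, hv⟩ := mem_blackApexes.1 hw
    exact ⟨u, v, w, rfl, huv, hwu, hwv,
      not_balancedTriad_of_red hCb huv hwv.symm hwu.symm hred hv hu,
      (h.rank_lt_rank hCb huv hred hwv.symm hv).le, (h.rank_lt_rank hCb huv hred hwu.symm hu).le⟩

theorem symm_flipEdge (hG : Symm G) (p : Sym2 (Fin n)) : Symm (flipEdge G p) := by
  intro u v
  simp only [flipEdge, Sym2.eq_swap (a := u), hG u v]

theorem flipEdge_ne_iff (hG : Symm G) (hC : Symm C) {u v x y : Fin n} (hred : G u v ≠ C u v) :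
    flipEdge G s(u, v) x y ≠ C x y ↔ s(x, y) ≠ s(u, v) ∧ G x y ≠ C x y := by
  by_cases hp : s(x, y) = s(u, v)
  · have hxy : G x y ≠ C x y := by
      rcases Sym2.eq_iff.1 hp with ⟨rfl, rfl⟩ | ⟨rfl, rfl⟩
      · exact hred
      · exact (red_comm hG hC).1 hred
    simp only [flipEdge, hp, if_true, ne_eq, not_true_eq_false, false_and, iff_false, not_not]
    revert hxy
    cases G x y <;> cases C x y <;> decide
  · simp [flipEdge, hp]

theorem diffEdges_flipEdge (hG : Symm G) (hC : Symm C) {u v : Fin n} (hred : G u v ≠ C u v) :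
    diffEdges (flipEdge G s(u, v)) C = (diffEdges G C).erase s(u, v) := by
  ext p
  induction p using Sym2.ind with
  | _ a b =>
    rw [mem_diffEdges (symm_flipEdge hG _) hC, mem_erase, mem_diffEdges hG hC,
      flipEdge_ne_iff hG hC hred]
    tauto

theorem sparseRed_flipEdge (hG : Symm G) (hC : Symm C) {u v : Fin n} (hred : G u v ≠ C u v)
    (h : SparseRed G C) : SparseRed (flipEdge G s(u, v)) C := by
  have hred_sub {x y : Fin n} (hxy : flipEdge G s(u, v) x y ≠ C x y) : G x y ≠ C x y :=
    ((flipEdge_ne_iff hG hC hred).1 hxy).2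
  refine h.imp (fun h x => le_trans ?_ (h x)) (fun h => le_trans ?_ h) <;> gcongr
  · exact fun y hy => mem_redNbrs.2 ⟨(mem_redNbrs.1 hy).1, hred_sub (mem_redNbrs.1 hy).2⟩
  · intro x hx
    obtain ⟨y, hyx, hxy⟩ := mem_redVertices.1 hx
    exact mem_redVertices.2 ⟨y, hyx, hred_sub hxy⟩


theorem FlipSeq.bedAdmissible_flips_diffEdges (hC : Symm C) (hCb : IsBalanced C)
    {P : SignedGraph n → Prop} (hdom : ∀ G, Symm G → P G → RedDominant G C)
    (hflip : ∀ G u v, Symm G → P G → G u v ≠ C u v → P (flipEdge G s(u, v)))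
    {H : SignedGraph n} {L : List (Sym2 (Fin n))} (hseq : FlipSeq BEDAdmissible G L H)
    (hG : Symm G) (hP : P G) (hmax : ∀ p, ¬ BEDAdmissible H p) :
    L.Nodup ∧ L.toFinset = diffEdges G C ∧ ∀ u v, u ≠ v → H u v = C u v := by
  induction hseq with
  | nil G =>
    have hempty : diffEdges G C = ∅ := eq_empty_of_forall_notMem fun p hp =>
      hmax p (((hdom G hG hP).bedAdmissible_iff hG hC hCb).2 hp)
    refine ⟨List.nodup_nil, hempty.symm, fun u v huv => ?_⟩
    by_contra hne
    simpa [hempty] using (mem_diffEdges hG hC).2 ⟨huv, hne⟩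
  | @cons G _ L p hadm _ ih =>
    have hp := ((hdom G hG hP).bedAdmissible_iff hG hC hCb).1 hadm
    obtain ⟨u, v, rfl, -, hred⟩ := (mem_filter.1 hp).2
    obtain ⟨hnodup, hL, hH⟩ := ih (symm_flipEdge hG _) (hflip G u v hG hP hred) hmax
    rw [diffEdges_flipEdge hG hC hred] at hL
    refine ⟨List.nodup_cons.2 ⟨fun hmem => ?_, hnodup⟩, ?_, hH⟩
    · exact notMem_erase _ _ (hL ▸ List.mem_toFinset.2 hmem)
    · rw [List.toFinset_cons, hL, insert_erase hp]

end RedEdges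

/-- Under either red-sparsity condition, every maximal sequence of
BED-admissible flips from `G` has length `k` (the number of red edges), flips each red
edge exactly once and no other edge, and terminates in the closest balanced state `C`. -/
theorem bed_fast_near_balance (n : ℕ) (G C : SignedGraph n) (hG : Symm G)
    (hC : IsClosestBalanced G C)
    (hcond : (∀ u : Fin n,
        ((univ.filter (fun v => v ≠ u ∧ G u v ≠ C u v)).card : ℝ) ≤ (n : ℝ) / 4 - 1) ∨
      ((univ.filter (fun u : Fin n => ∃ v, v ≠ u ∧ G u v ≠ C u v)).card : ℝ) ≤ (n : ℝ) / 2) :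
    ∀ (L : List (Sym2 (Fin n))) (H : SignedGraph n),
      FlipSeq BEDAdmissible G L H → (∀ p, ¬ BEDAdmissible H p) →
      L.length = (diffEdges G C).card ∧ L.Nodup ∧ L.toFinset = diffEdges G C ∧
      ∀ u v : Fin n, u ≠ v → H u v = C u v := by
  obtain ⟨hCs, hCb, -⟩ := hC
  intro L H hseq hmax
  obtain ⟨hnodup, hL, hH⟩ := hseq.bedAdmissible_flips_diffEdges (P := (SparseRed · C)) hCs hCb
    (fun _ hG' h => redDominant_of_sparseRed hG' hCs hCb h)
    (fun _ _ _ hG' h hred => sparseRed_flipEdge hG' hCs hred h) hG hcond hmax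
  exact ⟨(hL ▸ List.toFinset_card_of_nodup hnodup).symm, hnodup, hL, hH⟩
end
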